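/- arXiv:math/0610127 — 4 statements merged into one kernel-verified Lean document; each statement's English description precedes it below -/
import Mathlib

section
/- Let α be a real quadratic irrationality (i.e., α is irrational and satisfies a quadratic equation over ℚ). Then there exists a matrix g = [[a,b],[c,d]] in SL₂(ℤ) with trace a+d > 2 and c ≥ a+d+2 such that one of the fixed points θ of the fractional linear action of g on ℝ generates the same field extension of ℚ as α, i.e. ℚ(θ) = ℚ(α). -/
/-- For every real quadratic irrationality `α` there exist a matrix
`g = [[a,b],[c,d]] ∈ SL₂(ℤ)` with `a+d > 2` and `c ≥ a+d+2` and a fixed point `θ`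
of the fractional linear action of `g` on `ℝ` such that `ℚ(θ) = ℚ(α)`. -/
theorem stmt0 (α : ℝ) (hirr : Irrational α)
    (hquad : ∃ p q : ℚ, α ^ 2 + (p : ℝ) * α + (q : ℝ) = 0) :
    ∃ a b c d : ℤ, a * d - b * c = 1 ∧ a + d > 2 ∧ c ≥ a + d + 2 ∧
      ∃ θ : ℝ, ((a : ℝ) * θ + b) / ((c : ℝ) * θ + d) = θ ∧
        IntermediateField.adjoin ℚ ({θ} : Set ℝ) =
          IntermediateField.adjoin ℚ ({α} : Set ℝ) := by
  obtain ⟨p, q, hpq⟩ := hquad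
  set r : ℝ := (p : ℝ) + 2 * α with hrdef
  have hrirr : Irrational r := by
    have h2 : Irrational (((2 : ℚ) : ℝ) * α) := hirr.ratCast_mul (by norm_num)
    have h := h2.ratCast_add p
    rw [hrdef]
    have : ((2 : ℚ) : ℝ) = (2 : ℝ) := by norm_num
    rwa [this] at h
  have hr0 : r ≠ 0 := by
    intro h
    exact hrirr (h ▸ ⟨0, by norm_num⟩)
  set D : ℚ := p ^ 2 - 4 * q with hDdef
  have hr2 : r ^ 2 = (D : ℝ) := by
    rw [hrdef, hDdef]
    push_cast
    nlinarith [hpq]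
  have hD0 : 0 < D := by
    have : (0 : ℝ) < (D : ℝ) := by rw [← hr2]; positivity
    exact_mod_cast this
  set N : ℤ := D.num * D.den with hNdef
  have hden0 : ((D.den : ℚ)) ≠ 0 := by exact_mod_cast D.den_nz
  have hden0R : ((D.den : ℝ)) ≠ 0 := by exact_mod_cast D.den_nz
  have hnum : (D.num : ℚ) = D * D.den := by
    rw [← div_eq_iff hden0]; exact Rat.num_div_den D
  have hN0 : 0 < N := by
    have h1 : 0 < D.num := Rat.num_pos.mpr hD0
    have h2 : 0 < (D.den : ℤ) := by exact_mod_cast D.pos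
    exact mul_pos h1 h2
  have hrkN : (r * (D.den : ℝ)) ^ 2 = (N : ℝ) := by
    have key : (N : ℚ) = D * (D.den : ℚ) ^ 2 := by
      rw [hNdef]; push_cast [hnum]; ring
    have : ((N : ℤ) : ℝ) = (D : ℝ) * ((D.den : ℝ)) ^ 2 := by
      exact_mod_cast congrArg (fun x : ℚ => (x : ℝ)) key
    rw [mul_pow, hr2, this]
  have hNsq : ¬ IsSquare N := by
    rintro ⟨m, hm⟩
    have h1 : (r * (D.den : ℝ)) ^ 2 = ((m : ℝ)) ^ 2 := by
      rw [hrkN, hm]; push_cast; ring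
    have h2 := sq_eq_sq_iff_eq_or_eq_neg.mp h1
    apply hrirr
    rcases h2 with h | h
    · refine ⟨(m : ℚ) / (D.den : ℚ), ?_⟩
      push_cast
      rw [div_eq_iff hden0R]
      exact h.symm
    · refine ⟨-((m : ℚ)) / (D.den : ℚ), ?_⟩
      push_cast
      rw [div_eq_iff hden0R]
      linarith
  obtain ⟨x, y, hxy, hy0⟩ := Pell.exists_of_not_isSquare hN0 hNsq
  have hN2 : 2 ≤ N := by
    rcases lt_or_ge N 2 with h | h
    · interval_cases N
      · exact absurd ⟨1, by ring⟩ hNsq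
    · exact h
  set X : ℤ := x ^ 2 + N * y ^ 2 with hXdef
  set Y : ℤ := 2 * x * y with hYdef
  have hy1 : 1 ≤ y ^ 2 := by
    have h1 : y ^ 2 ≠ 0 := pow_ne_zero 2 hy0
    have h2 : 0 ≤ y ^ 2 := sq_nonneg y
    omega
  have hX5 : 5 ≤ X := by nlinarith
  have hXY : X ^ 2 - N * Y ^ 2 = 1 := by
    rw [hXdef, hYdef]; nlinarith
  have hY0 : Y ≠ 0 := by
    have hx0 : x ≠ 0 := by intro h; rw [h] at hxy; nlinarith
    simp [hYdef, hx0, hy0]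
  -- the matrix
  refine ⟨X, 1, X ^ 2 - 1, X, by ring, by omega, by nlinarith, ?_⟩
  -- the fixed point
  set w : ℝ := (Y : ℝ) * (D.den : ℝ) * r with hwdef
  have hw2 : w ^ 2 = ((X ^ 2 - 1 : ℤ) : ℝ) := by
    have h1 : w ^ 2 = (Y : ℝ) ^ 2 * (r * (D.den : ℝ)) ^ 2 := by rw [hwdef]; ring
    rw [h1, hrkN]
    have h2 : N * Y ^ 2 = X ^ 2 - 1 := by omega
    push_cast [← h2]
    ring
  have hw0 : w ≠ 0 := by
    have hY0' : ((Y : ℝ)) ≠ 0 := by exact_mod_cast hY0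
    exact mul_ne_zero (mul_ne_zero hY0' hden0R) hr0
  refine ⟨w⁻¹, ?_, ?_⟩
  · -- fixed point equation
    have hcθ : ((X ^ 2 - 1 : ℤ) : ℝ) * w⁻¹ = w := by
      rw [← hw2]; field_simp
    have hwX : w + (X : ℝ) ≠ 0 := by
      intro h
      have hwx : w = -(X : ℝ) := by linarith
      rw [hwx] at hw2
      have : ((X ^ 2 - 1 : ℤ) : ℝ) = (X : ℝ) ^ 2 := by rw [← hw2]; ring
      push_cast at this
      nlinarith
    rw [hcθ, div_eq_iff hwX]
    field_simp
    ring
  · -- field equality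
    apply le_antisymm
    · rw [IntermediateField.adjoin_le_iff, Set.singleton_subset_iff]
      have hα : α ∈ IntermediateField.adjoin ℚ ({α} : Set ℝ) :=
        IntermediateField.subset_adjoin ℚ _ rfl
      have hwmem : w ∈ IntermediateField.adjoin ℚ ({α} : Set ℝ) := by
        have hc1 : ((((Y : ℚ) * (D.den : ℚ) * p) : ℚ) : ℝ) ∈
            IntermediateField.adjoin ℚ ({α} : Set ℝ) := SubfieldClass.ratCast_mem _ _
        have hc2 : (((2 * (Y : ℚ) * (D.den : ℚ)) : ℚ) : ℝ) ∈
            IntermediateField.adjoin ℚ ({α} : Set ℝ) := SubfieldClass.ratCast_mem _ _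
        have hweq : w = ((((Y : ℚ) * (D.den : ℚ) * p) : ℚ) : ℝ) +
            (((2 * (Y : ℚ) * (D.den : ℚ)) : ℚ) : ℝ) * α := by
          rw [hwdef, hrdef]; push_cast; ring
        rw [hweq]
        exact add_mem hc1 (mul_mem hc2 hα)
      exact inv_mem hwmem
    · rw [IntermediateField.adjoin_le_iff, Set.singleton_subset_iff]
      have hθ : w⁻¹ ∈ IntermediateField.adjoin ℚ ({w⁻¹} : Set ℝ) :=
        IntermediateField.subset_adjoin ℚ _ rfl
      have hwmem : w ∈ IntermediateField.adjoin ℚ ({w⁻¹} : Set ℝ) := by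
        have := inv_mem hθ
        rwa [inv_inv] at this
      have hc0 : ((Y : ℚ) * (D.den : ℚ) : ℚ) ≠ 0 := by
        apply mul_ne_zero _ hden0
        exact_mod_cast hY0
      have hcmem : ((((Y : ℚ) * (D.den : ℚ))⁻¹ : ℚ) : ℝ) ∈
          IntermediateField.adjoin ℚ ({w⁻¹} : Set ℝ) := SubfieldClass.ratCast_mem _ _
      have hc0R : ((Y : ℝ) * (D.den : ℝ)) ≠ 0 := by
        have hY0' : ((Y : ℝ)) ≠ 0 := by exact_mod_cast hY0
        exact mul_ne_zero hY0' hden0R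
      have hrmem : r ∈ IntermediateField.adjoin ℚ ({w⁻¹} : Set ℝ) := by
        have hreq : r = ((((Y : ℚ) * (D.den : ℚ))⁻¹ : ℚ) : ℝ) * w := by
          rw [hwdef]
          push_cast
          field_simp
        rw [hreq]
        exact mul_mem hcmem hwmem
      have hpmem : ((p : ℝ)) ∈ IntermediateField.adjoin ℚ ({w⁻¹} : Set ℝ) :=
        SubfieldClass.ratCast_mem _ _
      have hhalf : (((1 : ℚ) / 2 : ℚ) : ℝ) ∈ IntermediateField.adjoin ℚ ({w⁻¹} : Set ℝ) :=
        SubfieldClass.ratCast_mem _ _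
      have hαeq : α = (((1 : ℚ) / 2 : ℚ) : ℝ) * (r - (p : ℝ)) := by
        rw [hrdef]; push_cast; ring
      rw [hαeq]
      exact mul_mem hhalf (sub_mem hrmem hpmem)
end

section
/- An irrational real number θ is a fixed point of some hyperbolic fractional linear transformation g ∈ SL₂(ℤ) (i.e. g·θ = θ with g ≠ ±I) if and only if θ generates a quadratic extension of ℚ, i.e. [ℚ(θ):ℚ] = 2. -/
open Polynomial

lemma aux_aeval (θ : ℝ) (A B C : ℤ)
    (heq : (A : ℝ) * θ ^ 2 + (B : ℝ) * θ + (C : ℝ) = 0) :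
    Polynomial.aeval θ (Polynomial.C (A : ℚ) * X ^ 2 + Polynomial.C (B : ℚ) * X
      + Polynomial.C (C : ℚ)) = 0 := by
  simp only [map_add, map_mul, map_pow, aeval_C, aeval_X, map_intCast]
  push_cast
  linear_combination heq

lemma aux_pne (A B C : ℤ) (hA : A ≠ 0) :
    (Polynomial.C (A : ℚ) * X ^ 2 + Polynomial.C (B : ℚ) * X + Polynomial.C (C : ℚ)) ≠ 0 := by
  intro h
  have h2 := congrArg (fun q => Polynomial.coeff q 2) h
  simp only [coeff_add, coeff_C_mul, coeff_X_pow, coeff_C, coeff_X, coeff_zero] at h2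
  norm_num at h2
  exact hA (by exact_mod_cast h2)

/-- If an irrational real satisfies a nontrivial integer quadratic, its adjoin has finrank 2. -/
lemma aux_finrank_two (θ : ℝ) (hirr : Irrational θ) (A B C : ℤ) (hA : A ≠ 0)
    (heq : (A : ℝ) * θ ^ 2 + (B : ℝ) * θ + (C : ℝ) = 0) :
    Module.finrank ℚ (IntermediateField.adjoin ℚ ({θ} : Set ℝ)) = 2 := by
  have hpne := aux_pne A B C hA
  have haev := aux_aeval θ A B C heq
  have halg : IsAlgebraic ℚ θ := ⟨_, hpne, haev⟩
  have hint : IsIntegral ℚ θ := halg.isIntegral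
  have hfr : Module.finrank ℚ (IntermediateField.adjoin ℚ ({θ} : Set ℝ)) =
      (minpoly ℚ θ).natDegree := IntermediateField.adjoin.finrank hint
  rw [hfr]
  have hle : (minpoly ℚ θ).natDegree ≤ 2 := by
    have hdvd := minpoly.dvd ℚ θ haev
    have := Polynomial.natDegree_le_of_dvd hdvd hpne
    refine this.trans ?_
    compute_degree
  have hne1 : (minpoly ℚ θ).natDegree ≠ 1 := by
    intro h1
    have : Module.finrank ℚ (IntermediateField.adjoin ℚ ({θ} : Set ℝ)) = 1 := by rw [hfr, h1]
    rw [IntermediateField.finrank_eq_one_iff] at this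
    have hmem : θ ∈ IntermediateField.adjoin ℚ ({θ} : Set ℝ) :=
      IntermediateField.subset_adjoin ℚ _ rfl
    rw [this, IntermediateField.mem_bot] at hmem
    obtain ⟨q, hq⟩ := hmem
    exact hirr ⟨q, hq⟩
  have hpos : 0 < (minpoly ℚ θ).natDegree := minpoly.natDegree_pos hint
  omega

/-- From a nontrivial integer quadratic for irrational θ, produce the SL₂ element. -/
lemma aux_exists_g (θ : ℝ) (hirr : Irrational θ) (A B C : ℤ) (hA : A ≠ 0)
    (heq : (A : ℝ) * θ ^ 2 + (B : ℝ) * θ + (C : ℝ) = 0) :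
    (∃ a b c d : ℤ, a * d - b * c = 1 ∧
        ¬(a = 1 ∧ b = 0 ∧ c = 0 ∧ d = 1) ∧
        ¬(a = -1 ∧ b = 0 ∧ c = 0 ∧ d = -1) ∧
        ((a : ℝ) * θ + b) / ((c : ℝ) * θ + d) = θ) := by
  set D : ℤ := B ^ 2 - 4 * A * C with hD
  have hkey : ((2 * A * θ + B) : ℝ) ^ 2 = (D : ℝ) := by
    push_cast [hD]
    linear_combination (4 * (A : ℝ)) * heq
  have hDnonneg : 0 ≤ (D : ℝ) := hkey ▸ sq_nonneg _
  have hnsq : ¬ IsSquare D := by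
    rintro ⟨k, hk⟩
    have hk' : ((2 * A * θ + B) : ℝ) ^ 2 = ((k : ℝ)) ^ 2 := by
      rw [hkey, hk]; push_cast; ring
    have : (2 * A * θ + B : ℝ) = k ∨ (2 * A * θ + B : ℝ) = -k := sq_eq_sq_iff_eq_or_eq_neg.mp hk'
    have hA' : (2 * (A : ℝ)) ≠ 0 := by
      simp only [ne_eq, mul_eq_zero, OfNat.ofNat_ne_zero, Int.cast_eq_zero, false_or]
      exact hA
    rcases this with h | h
    · apply hirr
      refine ⟨((k : ℚ) - B) / (2 * A), ?_⟩
      push_cast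
      field_simp
      linear_combination -h
    · apply hirr
      refine ⟨((-k : ℚ) - B) / (2 * A), ?_⟩
      push_cast
      field_simp
      linear_combination -h
  have hDpos : 0 < D := by
    rcases lt_or_eq_of_le (show (0:ℤ) ≤ D by exact_mod_cast hDnonneg) with h | h
    · exact h
    · exact absurd ⟨0, by omega⟩ hnsq
  obtain ⟨x, y, hxy, hy⟩ := Pell.exists_of_not_isSquare hDpos hnsq
  refine ⟨x - B * y, -(2 * C * y), 2 * A * y, x + B * y, ?_, ?_, ?_, ?_⟩
  · linear_combination hxy + (y^2) * hD
  · rintro ⟨-, -, hc, -⟩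
    rcases mul_eq_zero.mp hc with h | h
    · rcases mul_eq_zero.mp h with h | h
      · norm_num at h
      · exact hA h
    · exact hy h
  · rintro ⟨-, -, hc, -⟩
    rcases mul_eq_zero.mp hc with h | h
    · rcases mul_eq_zero.mp h with h | h
      · norm_num at h
      · exact hA h
    · exact hy h
  · have hden : ((2 * A * y : ℤ) : ℝ) * θ + ((x + B * y : ℤ) : ℝ) ≠ 0 := by
      intro h0
      apply hirr
      have hc : ((2 * A * y : ℤ) : ℝ) ≠ 0 := by
        simp only [ne_eq, Int.cast_eq_zero]
        intro h; rcases mul_eq_zero.mp h with h | h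
        · rcases mul_eq_zero.mp h with h | h
          · norm_num at h
          · exact hA h
        · exact hy h
      refine ⟨(-(x + B * y : ℤ) : ℚ) / ((2 * A * y : ℤ) : ℚ), ?_⟩
      push_cast at h0 ⊢
      push_cast at hc
      field_simp
      linear_combination -h0
    rw [div_eq_iff hden]
    push_cast at hden ⊢
    linear_combination (-2 * (y:ℝ)) * heq

/-- From finrank 2, produce a nontrivial integer quadratic satisfied by θ. -/
lemma aux_quad_of_finrank (θ : ℝ) (hirr : Irrational θ)
    (hfr : Module.finrank ℚ (IntermediateField.adjoin ℚ ({θ} : Set ℝ)) = 2) :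
    ∃ A B C : ℤ, A ≠ 0 ∧ (A : ℝ) * θ ^ 2 + (B : ℝ) * θ + (C : ℝ) = 0 := by
  have hfin : Module.Finite ℚ (IntermediateField.adjoin ℚ ({θ} : Set ℝ)) :=
    Module.finite_of_finrank_pos (by rw [hfr]; norm_num)
  have hmem : θ ∈ IntermediateField.adjoin ℚ ({θ} : Set ℝ) :=
    IntermediateField.subset_adjoin ℚ _ rfl
  have hint : IsIntegral ℚ θ := by
    have := IsIntegral.of_finite ℚ (⟨θ, hmem⟩ : IntermediateField.adjoin ℚ ({θ} : Set ℝ))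
    exact IntermediateField.isIntegral_iff.mp this
  have hdeg : (minpoly ℚ θ).natDegree = 2 := by
    rw [← IntermediateField.adjoin.finrank hint, hfr]
  set m := minpoly ℚ θ with hm
  have haev : Polynomial.aeval θ m = 0 := minpoly.aeval ℚ θ
  set p : ℚ := m.coeff 1 with hpc
  set q : ℚ := m.coeff 0 with hqc
  have hmon : m.Monic := minpoly.monic hint
  have hlead : m.coeff 2 = 1 := by
    have := hmon.leadingCoeff
    rwa [Polynomial.leadingCoeff, hdeg] at this
  have hreal : θ ^ 2 + (p : ℝ) * θ + (q : ℝ) = 0 := by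
    rw [Polynomial.aeval_eq_sum_range, hdeg] at haev
    rw [Finset.sum_range_succ, Finset.sum_range_succ, Finset.sum_range_one] at haev
    rw [hlead] at haev
    simp only [Rat.smul_def, one_smul, pow_zero, pow_one] at haev
    push_cast at haev ⊢
    linear_combination haev
  have hpn : (p.num : ℝ) = (p : ℝ) * (p.den : ℝ) := by
    have h := Rat.num_div_den p
    have : (p.num : ℚ) = p * (p.den : ℚ) := by
      field_simp at h ⊢
      linarith
    exact_mod_cast this
  have hqn : (q.num : ℝ) = (q : ℝ) * (q.den : ℝ) := by
    have h := Rat.num_div_den q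
    have : (q.num : ℚ) = q * (q.den : ℚ) := by
      field_simp at h ⊢
      linarith
    exact_mod_cast this
  refine ⟨(p.den : ℤ) * (q.den : ℤ), p.num * (q.den : ℤ), q.num * (p.den : ℤ), ?_, ?_⟩
  · positivity
  · push_cast
    linear_combination ((p.den : ℝ) * (q.den : ℝ)) * hreal + ((q.den : ℝ) * θ) * hpn
      + (p.den : ℝ) * hqn

/-- An irrational real number `θ` is a fixed point of some fractional
linear transformation `g ∈ SL₂(ℤ)` with `g ≠ ±I` if and only if `θ` generates a
quadratic extension of `ℚ`, i.e. `[ℚ(θ):ℚ] = 2`. -/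
theorem stmt1 (θ : ℝ) (hirr : Irrational θ) :
    (∃ a b c d : ℤ, a * d - b * c = 1 ∧
        ¬(a = 1 ∧ b = 0 ∧ c = 0 ∧ d = 1) ∧
        ¬(a = -1 ∧ b = 0 ∧ c = 0 ∧ d = -1) ∧
        ((a : ℝ) * θ + b) / ((c : ℝ) * θ + d) = θ) ↔
      Module.finrank ℚ (IntermediateField.adjoin ℚ ({θ} : Set ℝ)) = 2 := by
  constructor
  · rintro ⟨a, b, c, d, hdet, h1, h2, heq⟩
    have hden : (c : ℝ) * θ + d ≠ 0 := by
      rcases eq_or_ne c 0 with hc | hc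
      · have had : a * d = 1 := by have h := hdet; rw [hc] at h; simpa using h
        have hd : d ≠ 0 := by
          rcases Int.eq_one_or_neg_one_of_mul_eq_one' had with ⟨_, h⟩ | ⟨_, h⟩ <;> omega
        simp only [hc, Int.cast_zero, zero_mul, zero_add, ne_eq, Int.cast_eq_zero]
        exact hd
      · intro h0
        apply hirr
        refine ⟨(-d : ℚ) / (c : ℚ), ?_⟩
        have hc' : (c : ℝ) ≠ 0 := Int.cast_ne_zero.mpr hc
        push_cast
        field_simp
        linarith [h0]
    have hquad : (c : ℝ) * θ ^ 2 + ((d - a : ℤ) : ℝ) * θ + ((-b : ℤ) : ℝ) = 0 := by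
      rw [div_eq_iff hden] at heq
      push_cast
      linear_combination -heq
    rcases eq_or_ne c 0 with hc | hc
    · exfalso
      have had : a * d = 1 := by have h := hdet; rw [hc] at h; simpa using h
      have hb : (b : ℝ) = 0 := by
        rcases Int.eq_one_or_neg_one_of_mul_eq_one' had with ⟨ha, hd⟩ | ⟨ha, hd⟩ <;>
          · subst ha; subst hd; subst hc
            push_cast at hquad
            linarith [hquad]
      have hb' : b = 0 := by exact_mod_cast hb
      rcases Int.eq_one_or_neg_one_of_mul_eq_one' had with ⟨ha, hd⟩ | ⟨ha, hd⟩
      · exact h1 ⟨ha, hb', hc, hd⟩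
      · exact h2 ⟨ha, hb', hc, hd⟩
    · exact aux_finrank_two θ hirr c (d - a) (-b) hc hquad
  · intro hfr
    obtain ⟨A, B, C, hA, heq⟩ := aux_quad_of_finrank θ hirr hfr
    exact aux_exists_g θ hirr A B C hA heq
end

section
/- Let g = [[a,b],[c,d]] ∈ SL₂(ℤ) with gcd(c,d)=1. For integers α, β, γ, the set I(α,β,γ) = { n ∈ ℤ : n ≡ −cγ + c(a+d)α mod c²(a+d) and n ≡ c(d²+bc)γ − c(a+d)dβ mod c²(a+d) } is nonempty if and only if α ≡ d(γ−β) mod c. -/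
/-- For `g = [[a,b],[c,d]] ∈ SL₂(ℤ)` with `gcd(c,d) = 1`, `c > 0`,
`a+d > 0`, the index set `I(α,β,γ)` of the structure-constant theta series is
nonempty if and only if `α ≡ d(γ−β) mod c`. -/
theorem stmt5 (a b c d : ℤ) (hdet : a * d - b * c = 1) (hcop : IsCoprime c d)
    (hc : 0 < c) (htr : 0 < a + d) (α β γ : ℤ) :
    ({n : ℤ |
        n ≡ -c * γ + c * (a + d) * α [ZMOD c ^ 2 * (a + d)] ∧
        n ≡ c * (d ^ 2 + b * c) * γ - c * (a + d) * d * β [ZMOD c ^ 2 * (a + d)]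
      }).Nonempty ↔ α ≡ d * (γ - β) [ZMOD c] := by
  have hne : c * (a + d) ≠ 0 := mul_ne_zero hc.ne' htr.ne'
  have key : c * (d ^ 2 + b * c) * γ - c * (a + d) * d * β -
      (-c * γ + c * (a + d) * α) = (c * (a + d)) * (d * (γ - β) - α) := by
    linear_combination (-c * γ) * hdet
  constructor
  · rintro ⟨n, h1, h2⟩
    have h := h1.symm.trans h2
    have hd : c ^ 2 * (a + d) ∣ c * (d ^ 2 + b * c) * γ - c * (a + d) * d * β -
        (-c * γ + c * (a + d) * α) := h.dvd
    rw [key] at hd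
    rw [Int.modEq_iff_dvd]
    have : (c * (a + d)) * c ∣ (c * (a + d)) * (d * (γ - β) - α) := by
      have : c ^ 2 * (a + d) = (c * (a + d)) * c := by ring
      rwa [this] at hd
    exact (mul_dvd_mul_iff_left hne).mp this
  · intro h
    refine ⟨-c * γ + c * (a + d) * α, Int.ModEq.refl _, ?_⟩
    rw [Int.modEq_iff_dvd]
    rw [key]
    have hd : c ∣ d * (γ - β) - α := (Int.modEq_iff_dvd.mp h)
    obtain ⟨k, hk⟩ := hd
    exact ⟨k, by rw [hk]; ring⟩
end

section
/- Let a,b,c,d ∈ ℤ with ad − bc = 1 and c > 0. If α ≡ d(γ−β) mod c, then the congruence n ≡ −cγ + c(a+d)α mod c²(a+d) implies the congruence n ≡ c(d²+bc)γ − c(a+d)dβ mod c²(a+d); consequently the index set I(α,β,γ) equals { −cγ + c(a+d)α + m c²(a+d) : m ∈ ℤ }. -/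
/-- If `ad − bc = 1`, `c > 0`, `a+d > 2` and `α ≡ d(γ−β) mod c`, then
the first congruence defining `I(α,β,γ)` implies the second; consequently
`I(α,β,γ) = { −cγ + c(a+d)α + m·c²(a+d) : m ∈ ℤ }`. -/
theorem stmt6 (a b c d : ℤ) (hdet : a * d - b * c = 1) (hc : 0 < c)
    (htr : 2 < a + d) (α β γ : ℤ) (hcong : α ≡ d * (γ - β) [ZMOD c]) :
    (∀ n : ℤ, n ≡ -c * γ + c * (a + d) * α [ZMOD c ^ 2 * (a + d)] →
        n ≡ c * (d ^ 2 + b * c) * γ - c * (a + d) * d * β [ZMOD c ^ 2 * (a + d)]) ∧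
    {n : ℤ |
        n ≡ -c * γ + c * (a + d) * α [ZMOD c ^ 2 * (a + d)] ∧
        n ≡ c * (d ^ 2 + b * c) * γ - c * (a + d) * d * β [ZMOD c ^ 2 * (a + d)]} =
      {n : ℤ | ∃ m : ℤ, n = -c * γ + c * (a + d) * α + m * (c ^ 2 * (a + d))} := by
  have hdvd : c ∣ d * (γ - β) - α := (Int.modEq_iff_dvd.mp hcong)
  obtain ⟨k, hk⟩ := hdvd
  have key : (-c * γ + c * (a + d) * α) ≡
      c * (d ^ 2 + b * c) * γ - c * (a + d) * d * β [ZMOD c ^ 2 * (a + d)] := by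
    rw [Int.modEq_iff_dvd]
    exact ⟨k, by linear_combination c * (a + d) * hk - c * γ * hdet⟩
  refine ⟨fun n hn => hn.trans key, ?_⟩
  ext n
  simp only [Set.mem_setOf_eq]
  constructor
  · rintro ⟨h1, _⟩
    obtain ⟨m, hm⟩ := Int.modEq_iff_dvd.mp h1.symm
    exact ⟨m, by linarith⟩
  · rintro ⟨m, hm⟩
    have h1 : n ≡ -c * γ + c * (a + d) * α [ZMOD c ^ 2 * (a + d)] := by
      rw [Int.modEq_iff_dvd]
      exact ⟨-m, by linarith⟩
    exact ⟨h1, h1.trans key⟩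
end
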